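/- arXiv:1302.2066 — 7 statements merged into one kernel-verified Lean document; each statement's English description precedes it below -/
import Mathlib

section
/- Let (c₁,B₁),…,(cₘ,Bₘ) be a Brascamp–Lieb datum on ℝⁿ with Σᵢ cᵢ nᵢ = n, and suppose the positive definite n×n matrix A satisfies A⁻¹ = Σᵢ cᵢ Bᵢ* (Bᵢ A Bᵢ*)⁻¹ Bᵢ. Then the Gaussian functions fᵢ(x) = exp(−⟨(Bᵢ A Bᵢ*)⁻¹ x, x⟩/2) on ℝ^{nᵢ} achieve equality: ∫_{ℝⁿ} ∏ᵢ (fᵢ(Bᵢx))^{cᵢ} dx = C ∏ᵢ (∫_{ℝ^{nᵢ}} fᵢ dx)^{cᵢ}, where C = (det(A) / ∏ᵢ det(Bᵢ A Bᵢ*)^{cᵢ})^{1/2}. -/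
/-!
Under the hypothesis on `A⁻¹`, the integrand `∏ fᵢ(Bᵢ x)^{cᵢ}` is the single Gaussian
`exp(-⟨A⁻¹x, x⟩/2)`, so both sides are Gaussian integrals
`∫ exp(-⟨M⁻¹x, x⟩/2) = (2π)^{k/2} (det M)^{1/2}`. The scaling condition `∑ cᵢ nᵢ = n` makes the
powers of `2π` cancel, and what remains of the determinants is exactly the constant `C`.
-/

open MeasureTheory Matrix Real

theorem Matrix.integral_comp_mulVec {ι E : Type*} [Fintype ι] [DecidableEq ι]
    [NormedAddCommGroup E] [NormedSpace ℝ E] {S : Matrix ι ι ℝ} (hS : S.det ≠ 0) (g : (ι → ℝ) → E) :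
    ∫ x, g (S *ᵥ x) = |S.det|⁻¹ • ∫ y, g y := by
  have hS' : LinearMap.det (Matrix.toLin' S) ≠ 0 := by rwa [LinearMap.det_toLin']
  have hemb : MeasurableEmbedding S.mulVec := ((Matrix.toLin' S).equivOfDetNeZero hS')
    |>.toContinuousLinearEquiv.toHomeomorph.measurableEmbedding
  have hmap := Real.map_matrix_volume_pi_eq_smul_volume_pi hS
  rw [← hemb.integral_map, show S.mulVec = ⇑(toLin' S) from rfl, hmap, integral_smul_measure,
    ENNReal.toReal_ofReal (abs_nonneg _), abs_inv]

theorem integral_exp_neg_dotProduct_self_div_two (ι : Type*) [Fintype ι] :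
    ∫ y : ι → ℝ, exp (-(y ⬝ᵥ y) / 2) = √(2 * π) ^ Fintype.card ι := by
  have hprod : ∀ y : ι → ℝ, exp (-(y ⬝ᵥ y) / 2) = ∏ i, exp (-(1 / 2) * y i ^ 2) := by
    intro y
    rw [← exp_sum, dotProduct, neg_div, Finset.sum_div, ← Finset.sum_neg_distrib]
    exact congrArg exp (Finset.sum_congr rfl fun i _ => by ring)
  simp_rw [hprod]
  rw [integral_fintype_prod_volume_eq_pow (fun t : ℝ => exp (-(1 / 2) * t ^ 2)), integral_gaussian]
  norm_num [div_div_eq_mul_div, mul_comm]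

open scoped MatrixOrder in
theorem Matrix.PosDef.integral_exp_neg_mulVec_dotProduct_div_two {ι : Type*} [Fintype ι]
    [DecidableEq ι] {M : Matrix ι ι ℝ} (hM : M.PosDef) :
    ∫ x : ι → ℝ, exp (-(M *ᵥ x ⬝ᵥ x) / 2) = √(2 * π) ^ Fintype.card ι / √M.det := by
  set S := CFC.sqrt M
  have hSS : S * S = M := CFC.sqrt_mul_sqrt_self M hM.posSemidef.nonneg
  have hSsymm : Sᵀ = S := (CFC.sqrt_nonneg M).posSemidef.isHermitian
  have hdet : S.det * S.det = M.det := by rw [← det_mul, hSS]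
  have hSdet : S.det ≠ 0 := fun h => hM.det_pos.ne' (by rw [← hdet, h, zero_mul])
  -- `M = SᵀS` turns the quadratic form into a squared norm after the substitution `y = S x`.
  have hquad : ∀ x, M *ᵥ x ⬝ᵥ x = S *ᵥ x ⬝ᵥ S *ᵥ x := fun x => by
    rw [← hSS, ← mulVec_mulVec, dotProduct_comm, dotProduct_mulVec, ← mulVec_transpose, hSsymm]
  have habs : |S.det| = √M.det := by rw [← hdet, ← abs_mul_abs_self, sqrt_mul_self (abs_nonneg _)]
  simp_rw [hquad]
  rw [integral_comp_mulVec hSdet fun y => exp (-(y ⬝ᵥ y) / 2), habs,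
    integral_exp_neg_dotProduct_self_div_two, smul_eq_mul, inv_mul_eq_div]

theorem Matrix.PosDef.integral_exp_neg_inv_mulVec_dotProduct_div_two {ι : Type*} [Fintype ι]
    [DecidableEq ι] {M : Matrix ι ι ℝ} (hM : M.PosDef) :
    ∫ x : ι → ℝ, exp (-(M⁻¹ *ᵥ x ⬝ᵥ x) / 2) = √(2 * π) ^ Fintype.card ι * √M.det := by
  rw [hM.inv.integral_exp_neg_mulVec_dotProduct_div_two, det_nonsing_inv, Ring.inverse_eq_inv',
    sqrt_inv, div_inv_eq_mul]

theorem Matrix.vecMul_injective_of_mulVec_surjective {R m n : Type*} [Semiring R] [Fintype m]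
    [DecidableEq m] [Fintype n] {B : Matrix m n R} (hB : Function.Surjective B.mulVec) :
    Function.Injective B.vecMul := by
  obtain ⟨C, hBC⟩ := mulVec_surjective_iff_exists_right_inverse.mp hB
  intro u v huv
  simpa [vecMul_vecMul, hBC] using congrArg (· ᵥ* C) huv

theorem Matrix.sum_smul_transpose_mul_mul_mulVec_dotProduct {R ι n : Type*} [CommRing R]
    [Fintype n] {κ : ι → Type*} [∀ i, Fintype (κ i)] (s : Finset ι) (c : ι → R)
    (B : ∀ i, Matrix (κ i) n R) (N : ∀ i, Matrix (κ i) (κ i) R) (x : n → R) :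
    (∑ i ∈ s, c i • ((B i)ᵀ * N i * B i)) *ᵥ x ⬝ᵥ x =
      ∑ i ∈ s, c i * (N i *ᵥ (B i *ᵥ x) ⬝ᵥ B i *ᵥ x) := by
  rw [sum_mulVec, sum_dotProduct]
  refine Finset.sum_congr rfl fun i _ => ?_
  rw [smul_mulVec, smul_dotProduct, smul_eq_mul, ← mulVec_mulVec, ← mulVec_mulVec,
    mulVec_transpose, ← dotProduct_mulVec]

theorem prod_exp_neg_div_two_rpow {ι : Type*} (s : Finset ι) (q c : ι → ℝ) :
    ∏ i ∈ s, exp (-q i / 2) ^ c i = exp (-(∑ i ∈ s, c i * q i) / 2) := by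
  simp_rw [← exp_mul, ← exp_sum, neg_div, Finset.sum_div, ← Finset.sum_neg_distrib]
  exact congrArg exp (Finset.sum_congr rfl fun i _ => by ring)

theorem pow_mul_sqrt_eq_sqrt_div_mul_prod_rpow {ι : Type*} (s : Finset ι) {P a : ℝ} (hP : 0 < P)
    (ha : 0 ≤ a) {d c : ι → ℝ} (hd : ∀ i ∈ s, 0 < d i) {k : ι → ℕ} {n : ℕ}
    (hdim : ∑ i ∈ s, c i * k i = n) :
    P ^ n * √a = √(a / ∏ i ∈ s, d i ^ c i) * ∏ i ∈ s, (P ^ k i * √(d i)) ^ c i := by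
  have hfactor : ∀ i ∈ s, (P ^ k i * √(d i)) ^ c i = P ^ (c i * k i) * √(d i ^ c i) := by
    intro i hi
    rw [mul_rpow (by positivity) (sqrt_nonneg _), ← rpow_natCast, ← rpow_mul hP.le,
      sqrt_eq_rpow, sqrt_eq_rpow, ← rpow_mul (hd i hi).le, ← rpow_mul (hd i hi).le,
      mul_comm (k i : ℝ), mul_comm (1 / 2 : ℝ)]
  have hD : 0 < ∏ i ∈ s, d i ^ c i := Finset.prod_pos fun i hi => rpow_pos_of_pos (hd i hi) _
  rw [Finset.prod_congr rfl hfactor, Finset.prod_mul_distrib, ← rpow_sum_of_pos hP, hdim,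
    rpow_natCast, ← sqrt_prod _ fun i hi => (rpow_pos_of_pos (hd i hi) _).le, mul_left_comm,
    ← sqrt_mul (div_nonneg ha hD.le), div_mul_cancel₀ _ hD.ne']

theorem brascamp_lieb_equality_case_general
    (m n : ℕ) (ni : Fin m → ℕ) (c : Fin m → ℝ)
    (B : ∀ i, Matrix (Fin (ni i)) (Fin n) ℝ)
    (hB : ∀ i, Function.Surjective (B i).mulVec)
    (hdim : ∑ i, c i * (ni i : ℝ) = (n : ℝ))
    (A : Matrix (Fin n) (Fin n) ℝ) (hA : A.PosDef)
    (hjohn : A⁻¹ = ∑ i, c i • ((B i)ᵀ * (B i * A * (B i)ᵀ)⁻¹ * B i))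
    (f : ∀ i, (Fin (ni i) → ℝ) → ℝ)
    (hf : ∀ i x, f i x = Real.exp (- (((B i * A * (B i)ᵀ)⁻¹).mulVec x ⬝ᵥ x) / 2)) :
    ∫ x : Fin n → ℝ, ∏ i, (f i ((B i).mulVec x)) ^ (c i) =
      Real.sqrt (A.det / ∏ i, ((B i * A * (B i)ᵀ).det) ^ (c i)) *
        ∏ i, (∫ y : Fin (ni i) → ℝ, f i y) ^ (c i) := by
  have hBAB : ∀ i, (B i * A * (B i)ᵀ).PosDef := fun i => by
    simpa using hA.mul_mul_conjTranspose_same (vecMul_injective_of_mulVec_surjective (hB i))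
  have hintegrand : ∀ x, ∏ i, f i (B i *ᵥ x) ^ c i = exp (-(A⁻¹ *ᵥ x ⬝ᵥ x) / 2) := fun x => by
    simp_rw [hf, prod_exp_neg_div_two_rpow, hjohn, sum_smul_transpose_mul_mul_mulVec_dotProduct]
  have hfactor : ∀ i, ∫ y, f i y = √(2 * π) ^ ni i * √(B i * A * (B i)ᵀ).det := fun i => by
    simp_rw [hf, (hBAB i).integral_exp_neg_inv_mulVec_dotProduct_div_two, Fintype.card_fin]
  simp_rw [hintegrand, hA.integral_exp_neg_inv_mulVec_dotProduct_div_two, hfactor, Fintype.card_fin]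
  exact pow_mul_sqrt_eq_sqrt_div_mul_prod_rpow _ (by positivity) hA.det_pos.le
    (fun i _ => (hBAB i).det_pos) hdim

/-- **Equality case in the Brascamp–Lieb inequality** (Theorem 2 of the paper).
Under the condition `A⁻¹ = ∑ cᵢ Bᵢ* (Bᵢ A Bᵢ*)⁻¹ Bᵢ`, the Gaussian functions
`fᵢ(x) = exp(−⟨(Bᵢ A Bᵢ*)⁻¹ x, x⟩/2)` achieve equality in the Brascamp–Lieb
inequality with constant `C = (det A / ∏ det (Bᵢ A Bᵢ*)^{cᵢ})^{1/2}`. -/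
theorem brascamp_lieb_equality_case
    (m n : ℕ) (ni : Fin m → ℕ) (c : Fin m → ℝ) (hc : ∀ i, 0 < c i)
    (B : ∀ i, Matrix (Fin (ni i)) (Fin n) ℝ)
    (hB : ∀ i, Function.Surjective (B i).mulVec)
    (hdim : ∑ i, c i * (ni i : ℝ) = (n : ℝ))
    (A : Matrix (Fin n) (Fin n) ℝ) (hA : A.PosDef)
    (hjohn : A⁻¹ = ∑ i, c i • ((B i)ᵀ * (B i * A * (B i)ᵀ)⁻¹ * B i))
    (f : ∀ i, (Fin (ni i) → ℝ) → ℝ)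
    (hf : ∀ i x, f i x = Real.exp (- (((B i * A * (B i)ᵀ)⁻¹).mulVec x ⬝ᵥ x) / 2)) :
    ∫ x : Fin n → ℝ, ∏ i, (f i ((B i).mulVec x)) ^ (c i) =
      Real.sqrt (A.det / ∏ i, ((B i * A * (B i)ᵀ).det) ^ (c i)) *
        ∏ i, (∫ y : Fin (ni i) → ℝ, f i y) ^ (c i) :=
  brascamp_lieb_equality_case_general m n ni c B hB hdim A hA hjohn f hf
end

section
/- Let c₁,…,cₘ be positive reals, B₁,…,Bₘ linear maps Bᵢ : ℝⁿ → ℝ^{nᵢ}, and A₁,…,Aₘ positive definite matrices on ℝ^{n₁},…,ℝ^{nₘ} respectively. Assume S = Σᵢ cᵢ Bᵢ* Aᵢ⁻¹ Bᵢ is positive definite and set A = S⁻¹. Then for every x ∈ ℝⁿ, ⟨A x, x⟩ = inf { Σᵢ cᵢ ⟨Aᵢ xᵢ, xᵢ⟩ : (x₁,…,xₘ) ∈ ℝ^{n₁}×⋯×ℝ^{nₘ}, Σᵢ cᵢ Bᵢ* xᵢ = x }, and the infimum is attained at xᵢ = Aᵢ⁻¹ Bᵢ A x. -/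
/-!
Put `v = A x` and `zᵢ = Aᵢ⁻¹ Bᵢ v`. Then `∑ cᵢ Bᵢᵀ zᵢ = S v = x`, so `z` is feasible, and
for every feasible `y` the cross term `∑ cᵢ ⟨Aᵢ zᵢ, yᵢ⟩ = ⟨v, ∑ cᵢ Bᵢᵀ yᵢ⟩ = ⟨v, x⟩` does not
depend on `y`. Expanding `0 ≤ ∑ cᵢ ⟨Aᵢ (yᵢ - zᵢ), yᵢ - zᵢ⟩` therefore gives
`∑ cᵢ ⟨Aᵢ yᵢ, yᵢ⟩ ≥ 2 ⟨v, x⟩ - ⟨v, x⟩ = ⟨A x, x⟩`, with equality at `y = z`.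
-/

open Matrix

namespace Matrix

variable {ι n : Type*} [Fintype ι] [Fintype n] {κ : ι → Type*} [∀ i, Fintype (κ i)]

lemma mulVec_nonsing_inv_mulVec {K : Type*} [Field K] [DecidableEq n] {M : Matrix n n K}
    (hM : IsUnit M) (w : n → K) : M *ᵥ (M⁻¹ *ᵥ w) = w := by
  rw [mulVec_mulVec, mul_nonsing_inv _ ((isUnit_iff_isUnit_det M).mp hM), one_mulVec]

lemma sum_smul_mul_mul_mulVec {R : Type*} [CommSemiring R] {m : Type*} (c : ι → R)
    (P : ∀ i, Matrix m (κ i) R) (C : ∀ i, Matrix (κ i) (κ i) R) (Q : ∀ i, Matrix (κ i) n R)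
    (v : n → R) :
    (∑ i, c i • (P i * C i * Q i)) *ᵥ v = ∑ i, c i • P i *ᵥ (C i *ᵥ (Q i *ᵥ v)) := by
  simp only [sum_mulVec, smul_mulVec, mulVec_mulVec, Matrix.mul_assoc]

lemma dotProduct_sum_smul_transpose_mulVec {R : Type*} [CommSemiring R] (c : ι → R)
    (B : ∀ i, Matrix (κ i) n R) (v : n → R) (y : ∀ i, κ i → R) :
    v ⬝ᵥ ∑ i, c i • (B i)ᵀ *ᵥ y i = ∑ i, c i * (B i *ᵥ v ⬝ᵥ y i) := by
  simp only [dotProduct_sum, dotProduct_smul, dotProduct_transpose_mulVec, dotProduct_comm (y _),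
    smul_eq_mul]

lemma PosSemidef.two_mul_mulVec_dotProduct_sub_le {M : Matrix n n ℝ} (hM : M.PosSemidef)
    (y z : n → ℝ) : 2 * (M *ᵥ z ⬝ᵥ y) - M *ᵥ z ⬝ᵥ z ≤ M *ᵥ y ⬝ᵥ y := by
  have hsymm : M *ᵥ y ⬝ᵥ z = M *ᵥ z ⬝ᵥ y := by
    rw [dotProduct_comm, ← dotProduct_transpose_mulVec, ← conjTranspose_eq_transpose_of_trivial,
      hM.isHermitian.eq, dotProduct_comm]
  have hnonneg := hM.dotProduct_mulVec_nonneg (y - z)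
  simp only [star_trivial, mulVec_sub, dotProduct_sub, sub_dotProduct,
    dotProduct_comm (y - z)] at hnonneg
  linarith

end Matrix

/-- **Quadratic infimum lemma** (Lemma 5 of the paper).
If `A = (∑ cᵢ Bᵢ* Aᵢ⁻¹ Bᵢ)⁻¹` with each `Aᵢ` positive definite, then
`⟨Ax, x⟩ = inf { ∑ cᵢ ⟨Aᵢ xᵢ, xᵢ⟩ : ∑ cᵢ Bᵢ* xᵢ = x }`, with the infimum
attained at `xᵢ = Aᵢ⁻¹ Bᵢ A x`. -/
theorem quadratic_infimum_lemma
    (m n : ℕ) (ni : Fin m → ℕ) (c : Fin m → ℝ) (hc : ∀ i, 0 < c i)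
    (B : ∀ i, Matrix (Fin (ni i)) (Fin n) ℝ)
    (Ai : ∀ i, Matrix (Fin (ni i)) (Fin (ni i)) ℝ) (hAi : ∀ i, (Ai i).PosDef)
    (S : Matrix (Fin n) (Fin n) ℝ)
    (hS : S = ∑ i, c i • ((B i)ᵀ * (Ai i)⁻¹ * B i)) (hSpos : S.PosDef)
    (A : Matrix (Fin n) (Fin n) ℝ) (hA : A = S⁻¹) (x : Fin n → ℝ) :
    IsLeast {r : ℝ | ∃ y : ∀ i, Fin (ni i) → ℝ,
        (∑ i, c i • (B i)ᵀ.mulVec (y i)) = x ∧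
        r = ∑ i, c i * ((Ai i).mulVec (y i) ⬝ᵥ y i)}
      (A.mulVec x ⬝ᵥ x) ∧
    (∑ i, c i • (B i)ᵀ.mulVec ((Ai i)⁻¹.mulVec ((B i).mulVec (A.mulVec x)))) = x ∧
    A.mulVec x ⬝ᵥ x =
      ∑ i, c i * ((Ai i).mulVec ((Ai i)⁻¹.mulVec ((B i).mulVec (A.mulVec x))) ⬝ᵥ
        (Ai i)⁻¹.mulVec ((B i).mulVec (A.mulVec x))) := by
  subst hA
  set v := S⁻¹ *ᵥ x
  set z : ∀ i, Fin (ni i) → ℝ := fun i => (Ai i)⁻¹ *ᵥ (B i *ᵥ v)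
  have hAz (i : Fin m) : Ai i *ᵥ z i = B i *ᵥ v := mulVec_nonsing_inv_mulVec (hAi i).isUnit _
  have hfeas : ∑ i, c i • (B i)ᵀ *ᵥ z i = x := by
    rw [← sum_smul_mul_mul_mulVec, ← hS]
    exact mulVec_nonsing_inv_mulVec hSpos.isUnit x
  have hcross {y : ∀ i, Fin (ni i) → ℝ} (hy : ∑ i, c i • (B i)ᵀ *ᵥ y i = x) :
      ∑ i, c i * (Ai i *ᵥ z i ⬝ᵥ y i) = v ⬝ᵥ x := by
    simp only [hAz, ← dotProduct_sum_smul_transpose_mulVec, hy]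
  have hval : v ⬝ᵥ x = ∑ i, c i * (Ai i *ᵥ z i ⬝ᵥ z i) := (hcross hfeas).symm
  refine ⟨⟨⟨z, hfeas, hval⟩, ?_⟩, hfeas, hval⟩
  rintro r ⟨y, hy, rfl⟩
  calc v ⬝ᵥ x = ∑ i, c i * (2 * (Ai i *ᵥ z i ⬝ᵥ y i) - Ai i *ᵥ z i ⬝ᵥ z i) := by
        simp only [mul_sub, Finset.sum_sub_distrib, mul_left_comm _ (2 : ℝ), ← Finset.mul_sum,
          hcross hy, ← hval]
        ring
    _ ≤ ∑ i, c i * (Ai i *ᵥ y i ⬝ᵥ y i) := Finset.sum_le_sum fun i _ =>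
        mul_le_mul_of_nonneg_left ((hAi i).posSemidef.two_mul_mulVec_dotProduct_sub_le _ _)
          (hc i).le
end

section
/- Let c₁, c₂, c₃ ∈ (0,1) with c₁ + c₂ + c₃ = 2, and consider the linear maps B₁, B₂, B₃ : ℝ² → ℝ given by B₁(x,y) = x+y, B₂(x,y) = y, B₃(x,y) = x. Then the 2×2 matrix A with entries A₁₁ = c₃(1−c₃), A₂₂ = c₂(1−c₂), A₁₂ = A₂₁ = −(1−c₂)(1−c₃) is positive definite and satisfies A⁻¹ = Σ_{i=1}^{3} cᵢ Bᵢ* (Bᵢ A Bᵢ*)⁻¹ Bᵢ; moreover (det(A) / ∏_{i=1}^{3} det(Bᵢ A Bᵢ*)^{cᵢ})^{1/2} = ((1−c₁)^{1−c₁} (1−c₂)^{1−c₂} (1−c₃)^{1−c₃} / (c₁^{c₁} c₂^{c₂} c₃^{c₃}))^{1/2}. -/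
/-!
Write `aᵢ = 1 - cᵢ`, so that `a₁ + a₂ + a₃ = 1`. The quadratic form of `A` is
`a₁ (a₃ x² + a₂ y²) + a₂ a₃ (x - y)²`, which gives positive definiteness, and `det A = a₁ a₂ a₃`.
Each compression `Bᵢ A Bᵢ*` is the scalar `cᵢ aᵢ`, so the weight `cᵢ` cancels in
`cᵢ Bᵢ* (Bᵢ A Bᵢ*)⁻¹ Bᵢ = aᵢ⁻¹ Bᵢ* Bᵢ`, and the sum of these is checked to be `A⁻¹` entrywise.
The constant then splits into the factors `aᵢ / (cᵢ aᵢ)^cᵢ = aᵢ^(1 - cᵢ) / cᵢ^cᵢ`.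
-/

open Matrix

theorem Matrix.smul_transpose_mul_inv_mul_of_fin_one {K n : Type*} [Field K] [Fintype n]
    (b : Matrix (Fin 1) n K) {c a : K} (hc : c ≠ 0) :
    c • (bᵀ * !![c * a]⁻¹ * b) = a⁻¹ • (bᵀ * b) := by
  rw [inv_def, adjugate_fin_one, det_fin_one_of, Ring.inverse_eq_inv', Matrix.mul_smul,
    Matrix.mul_one, Matrix.smul_mul, smul_smul, mul_inv, ← mul_assoc, mul_inv_cancel₀ hc, one_mul]

theorem Real.div_mul_rpow_self {c a : ℝ} (hc : 0 < c) (ha : 0 < a) :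
    a / (c * a) ^ c = a ^ (1 - c) / c ^ c := by
  rw [Real.mul_rpow hc.le ha.le, Real.rpow_sub ha, Real.rpow_one, div_mul_eq_div_div_swap]

def youngMatrix (c₂ c₃ : ℝ) : Matrix (Fin 2) (Fin 2) ℝ :=
  !![c₃ * (1 - c₃), -((1 - c₂) * (1 - c₃)); -((1 - c₂) * (1 - c₃)), c₂ * (1 - c₂)]

section

variable {c₁ c₂ c₃ : ℝ}

theorem dotProduct_youngMatrix_mulVec (hsum : c₁ + c₂ + c₃ = 2) (x : Fin 2 → ℝ) :
    x ⬝ᵥ youngMatrix c₂ c₃ *ᵥ x =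
      (1 - c₁) * ((1 - c₃) * x 0 ^ 2 + (1 - c₂) * x 1 ^ 2) +
        (1 - c₂) * (1 - c₃) * (x 0 - x 1) ^ 2 := by
  obtain rfl : c₁ = 2 - c₂ - c₃ := by linarith
  simp only [youngMatrix, dotProduct, mulVec, Fin.sum_univ_two, of_apply, cons_val', cons_val_zero,
    cons_val_one, cons_val_fin_one]
  ring

theorem posDef_youngMatrix (hsum : c₁ + c₂ + c₃ = 2) (h₁ : c₁ < 1) (h₂ : c₂ < 1) (h₃ : c₃ < 1) :
    (youngMatrix c₂ c₃).PosDef := by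
  have ha₁ : 0 < 1 - c₁ := sub_pos.2 h₁
  have ha₂ : 0 < 1 - c₂ := sub_pos.2 h₂
  have ha₃ : 0 < 1 - c₃ := sub_pos.2 h₃
  refine posDef_iff_dotProduct_mulVec.2 ⟨?_, fun x hx => ?_⟩
  · ext i j
    fin_cases i <;> fin_cases j <;> simp [youngMatrix]
  · rw [star_trivial, dotProduct_youngMatrix_mulVec hsum]
    obtain ⟨i, hi⟩ := Function.ne_iff.1 hx
    have hdiag : 0 < (1 - c₃) * x 0 ^ 2 + (1 - c₂) * x 1 ^ 2 := by
      fin_cases i <;> have := sq_pos_of_ne_zero hi <;> positivity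
    positivity

theorem det_youngMatrix (hsum : c₁ + c₂ + c₃ = 2) :
    (youngMatrix c₂ c₃).det = (1 - c₁) * (1 - c₂) * (1 - c₃) := by
  obtain rfl : c₁ = 2 - c₂ - c₃ := by linarith
  rw [youngMatrix, det_fin_two_of]
  ring

theorem row_mul_youngMatrix_mul_transpose_one_one (hsum : c₁ + c₂ + c₃ = 2) :
    !![(1 : ℝ), 1] * youngMatrix c₂ c₃ * !![(1 : ℝ), 1]ᵀ = !![c₁ * (1 - c₁)] := by
  obtain rfl : c₁ = 2 - c₂ - c₃ := by linarith
  ext i j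
  fin_cases i; fin_cases j
  simp only [youngMatrix, mul_apply, transpose_apply, Fin.sum_univ_two, of_apply, cons_val',
    cons_val_zero, cons_val_one, cons_val_fin_one]
  ring

theorem row_mul_youngMatrix_mul_transpose_zero_one :
    !![(0 : ℝ), 1] * youngMatrix c₂ c₃ * !![(0 : ℝ), 1]ᵀ = !![c₂ * (1 - c₂)] := by
  ext i j
  fin_cases i; fin_cases j
  simp [youngMatrix, mul_apply, Fin.sum_univ_two]

theorem row_mul_youngMatrix_mul_transpose_one_zero :
    !![(1 : ℝ), 0] * youngMatrix c₂ c₃ * !![(1 : ℝ), 0]ᵀ = !![c₃ * (1 - c₃)] := by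
  ext i j
  fin_cases i; fin_cases j
  simp [youngMatrix, mul_apply, Fin.sum_univ_two]

theorem inv_youngMatrix (hsum : c₁ + c₂ + c₃ = 2) (h₁ : c₁ ≠ 1) (h₂ : c₂ ≠ 1) (h₃ : c₃ ≠ 1) :
    (youngMatrix c₂ c₃)⁻¹ = (1 - c₁)⁻¹ • (!![(1 : ℝ), 1]ᵀ * !![(1 : ℝ), 1]) +
      (1 - c₂)⁻¹ • (!![(0 : ℝ), 1]ᵀ * !![(0 : ℝ), 1]) +
      (1 - c₃)⁻¹ • (!![(1 : ℝ), 0]ᵀ * !![(1 : ℝ), 0]) := by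
  have ha₁ : 1 - c₁ ≠ 0 := sub_ne_zero.2 h₁.symm
  have ha₂ : 1 - c₂ ≠ 0 := sub_ne_zero.2 h₂.symm
  have ha₃ : 1 - c₃ ≠ 0 := sub_ne_zero.2 h₃.symm
  apply inv_eq_right_inv
  obtain rfl : c₁ = 2 - c₂ - c₃ := by linarith
  rw [one_fin_two]
  ext i j
  fin_cases i <;> fin_cases j <;>
  · simp only [youngMatrix, mul_apply, Matrix.add_apply, Matrix.smul_apply, transpose_apply,
      Fin.sum_univ_two, Fin.sum_univ_one, Fin.zero_eta, Fin.mk_one, Fin.isValue, of_apply, cons_val',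
      cons_val_zero, cons_val_one, cons_val_fin_one, smul_eq_mul]
    field_simp
    ring

end

/-- **The extremal matrix for Young's inequality** (Example in Section 2 of the paper).
For the Brascamp–Lieb datum `(c₁, (1,1)), (c₂, (0,1)), (c₃, (1,0))` on `ℝ²` with
`c₁ + c₂ + c₃ = 2`, the matrix
`A = [[c₃(1−c₃), −(1−c₂)(1−c₃)], [−(1−c₂)(1−c₃), c₂(1−c₂)]]` is positive definite,
satisfies `A⁻¹ = ∑ cᵢ Bᵢ*(Bᵢ A Bᵢ*)⁻¹ Bᵢ`, and yields Beckner's sharp constant. -/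
theorem young_extremal_matrix
    (c₁ c₂ c₃ : ℝ) (hc₁ : c₁ ∈ Set.Ioo (0 : ℝ) 1) (hc₂ : c₂ ∈ Set.Ioo (0 : ℝ) 1)
    (hc₃ : c₃ ∈ Set.Ioo (0 : ℝ) 1) (hsum : c₁ + c₂ + c₃ = 2)
    (B₁ B₂ B₃ : Matrix (Fin 1) (Fin 2) ℝ)
    (hB₁ : B₁ = !![1, 1]) (hB₂ : B₂ = !![0, 1]) (hB₃ : B₃ = !![1, 0])
    (A : Matrix (Fin 2) (Fin 2) ℝ)
    (hA : A = !![c₃ * (1 - c₃), -((1 - c₂) * (1 - c₃));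
                 -((1 - c₂) * (1 - c₃)), c₂ * (1 - c₂)]) :
    A.PosDef ∧
    A⁻¹ = c₁ • (B₁ᵀ * (B₁ * A * B₁ᵀ)⁻¹ * B₁) + c₂ • (B₂ᵀ * (B₂ * A * B₂ᵀ)⁻¹ * B₂) +
        c₃ • (B₃ᵀ * (B₃ * A * B₃ᵀ)⁻¹ * B₃) ∧
    Real.sqrt (A.det /
        ((B₁ * A * B₁ᵀ).det ^ c₁ * (B₂ * A * B₂ᵀ).det ^ c₂ * (B₃ * A * B₃ᵀ).det ^ c₃)) =
      Real.sqrt (((1 - c₁) ^ (1 - c₁) * (1 - c₂) ^ (1 - c₂) * (1 - c₃) ^ (1 - c₃)) /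
        (c₁ ^ c₁ * c₂ ^ c₂ * c₃ ^ c₃)) := by
  obtain ⟨h₁, h₁'⟩ := hc₁
  obtain ⟨h₂, h₂'⟩ := hc₂
  obtain ⟨h₃, h₃'⟩ := hc₃
  obtain rfl : A = youngMatrix c₂ c₃ := hA
  subst hB₁ hB₂ hB₃
  rw [row_mul_youngMatrix_mul_transpose_one_one hsum, row_mul_youngMatrix_mul_transpose_zero_one,
    row_mul_youngMatrix_mul_transpose_one_zero]
  refine ⟨posDef_youngMatrix hsum h₁' h₂' h₃', ?_, ?_⟩
  · rw [smul_transpose_mul_inv_mul_of_fin_one _ h₁.ne',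
      smul_transpose_mul_inv_mul_of_fin_one _ h₂.ne', smul_transpose_mul_inv_mul_of_fin_one _ h₃.ne']
    exact inv_youngMatrix hsum h₁'.ne h₂'.ne h₃'.ne
  · rw [det_youngMatrix hsum, det_fin_one_of, det_fin_one_of, det_fin_one_of]
    simp only [mul_div_mul_comm, Real.div_mul_rpow_self h₁ (sub_pos.2 h₁'),
      Real.div_mul_rpow_self h₂ (sub_pos.2 h₂'), Real.div_mul_rpow_self h₃ (sub_pos.2 h₃')]
end

section
/- Let (c₁,B₁),…,(cₘ,Bₘ) be a Brascamp–Lieb datum on ℝⁿ with Σᵢ cᵢ nᵢ = n and ⋂ᵢ ker(Bᵢ) = {0}, and let C ≥ 0. Then the following are equivalent: (i) for every collection of positive definite matrices A₁,…,Aₘ on ℝ^{n₁},…,ℝ^{nₘ}, ∏ᵢ det(Aᵢ)^{cᵢ} ≤ C² det(Σᵢ cᵢ Bᵢ* Aᵢ Bᵢ); (ii) for every positive definite n×n matrix A, det(A) ≤ C² ∏ᵢ det(Bᵢ A Bᵢ*)^{cᵢ}. -/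
/-!
Both directions rest on the inequality `det P * det Q ≤ exp (tr (P * Q) - N)` for positive
semidefinite `N × N` matrices (the bound `log det ≤ tr - N` applied to `√P * Q * √P`), which is
an equality for `Q = P⁻¹`. Given `A`, test (i) on `Aᵢ = (Bᵢ A Bᵢᵀ)⁻¹`: the matrix
`M = ∑ cᵢ Bᵢᵀ Aᵢ Bᵢ` has `tr (A M) = ∑ cᵢ nᵢ = n`, so `det A * det M ≤ 1`. Given the `Aᵢ`, test
(ii) on `M⁻¹`: now `∑ cᵢ tr (Aᵢ Bᵢ M⁻¹ Bᵢᵀ) = tr (M M⁻¹) = n = ∑ cᵢ nᵢ`, so the `cᵢ`-weighted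
product of the inequalities for the pairs `(Aᵢ, Bᵢ M⁻¹ Bᵢᵀ)` is
`∏ (det Aᵢ * det (Bᵢ M⁻¹ Bᵢᵀ)) ^ cᵢ ≤ 1`. In both cases the homogeneity condition is exactly
what makes the exponent vanish.
-/

open Matrix

namespace Matrix

variable {N m : Type*} [Fintype N] [Fintype m]

lemma vecMul_injective_of_surjective_mulVec [DecidableEq m] {R : Type*} [CommRing R]
    {B : Matrix m N R} (hB : Function.Surjective B.mulVec) : Function.Injective B.vecMul := by
  obtain ⟨C, hC⟩ := mulVec_surjective_iff_exists_right_inverse.mp hB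
  intro x y h
  simpa [vecMul_vecMul, hC] using congr_arg (· ᵥ* C) h

lemma PosSemidef.mul_mul_transpose_same {A : Matrix N N ℝ} (hA : A.PosSemidef)
    (B : Matrix m N ℝ) : (B * A * Bᵀ).PosSemidef := by
  simpa using hA.mul_mul_conjTranspose_same B

lemma PosDef.mul_mul_transpose_of_surjective [DecidableEq m] {A : Matrix N N ℝ}
    {B : Matrix m N ℝ} (hA : A.PosDef) (hB : Function.Surjective B.mulVec) :
    (B * A * Bᵀ).PosDef := by
  simpa using hA.mul_mul_conjTranspose_same (vecMul_injective_of_surjective_mulVec hB)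

variable [DecidableEq N]

lemma PosSemidef.det_le_exp_trace_sub_card {A : Matrix N N ℝ} (hA : A.PosSemidef) :
    A.det ≤ Real.exp (A.trace - Fintype.card N) := by
  rw [hA.1.det_eq_prod_eigenvalues, hA.1.trace_eq_sum_eigenvalues]
  simp only [RCLike.ofReal_real_eq_id, id_eq]
  rw [← Finset.card_univ, ← nsmul_one, ← Finset.sum_const, ← Finset.sum_sub_distrib, Real.exp_sum]
  exact Finset.prod_le_prod (fun i _ => hA.eigenvalues_nonneg i)
    fun i _ => by linarith [Real.add_one_le_exp (hA.1.eigenvalues i - 1)]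

open scoped MatrixOrder in
lemma PosSemidef.det_mul_det_le_exp_trace_mul_sub_card {P Q : Matrix N N ℝ}
    (hP : P.PosSemidef) (hQ : Q.PosSemidef) :
    P.det * Q.det ≤ Real.exp ((P * Q).trace - Fintype.card N) := by
  set S := CFC.sqrt P
  have hS : S.IsHermitian := (CFC.sqrt_nonneg P).posSemidef.1
  have hSS : S * S = P := CFC.sqrt_mul_sqrt_self P hP.nonneg
  have hSQS : (S * Q * S).PosSemidef := by
    simpa only [hS.eq] using hQ.mul_mul_conjTranspose_same S
  calc P.det * Q.det = (S * Q * S).det := by rw [← hSS, det_mul, det_mul, det_mul]; ring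
    _ ≤ Real.exp ((S * Q * S).trace - Fintype.card N) := hSQS.det_le_exp_trace_sub_card
    _ = Real.exp ((P * Q).trace - Fintype.card N) := by rw [trace_mul_cycle, hSS]

end Matrix

lemma le_mul_of_mul_le_one_of_inv_le_mul {a m q K : ℝ} (hm : 0 ≤ m) (hq : 0 < q)
    (ham : a * m ≤ 1) (hqm : q⁻¹ ≤ K * m) : a ≤ K * q := by
  have hKqm : 1 ≤ K * q * m := by
    rw [inv_le_iff_one_le_mul₀ hq] at hqm
    linarith
  have hKq : 0 ≤ K * q := by
    by_contra! h
    nlinarith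
  rcases le_or_gt a 0 with ha | ha
  · linarith
  · nlinarith

namespace BrascampLieb

variable {ι N : Type*} [Fintype ι] [Fintype N] {p : ι → Type*} [∀ i, Fintype (p i)]
  {c : ι → ℝ} {B : ∀ i, Matrix (p i) N ℝ}

def pullbackSum (c : ι → ℝ) (B : ∀ i, Matrix (p i) N ℝ) (X : ∀ i, Matrix (p i) (p i) ℝ) :
    Matrix N N ℝ :=
  ∑ i, c i • ((B i)ᵀ * X i * B i)

lemma trace_pullbackSum_mul (X : ∀ i, Matrix (p i) (p i) ℝ) (Y : Matrix N N ℝ) :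
    (pullbackSum c B X * Y).trace = ∑ i, c i * (X i * (B i * Y * (B i)ᵀ)).trace := by
  simp only [pullbackSum, Matrix.sum_mul, trace_sum, smul_mul_assoc, trace_smul, smul_eq_mul]
  congr! 2 with i
  rw [Matrix.mul_assoc, Matrix.mul_assoc, trace_mul_comm, Matrix.mul_assoc, Matrix.mul_assoc]

lemma posSemidef_pullbackSum (hc : ∀ i, 0 ≤ c i) {X : ∀ i, Matrix (p i) (p i) ℝ}
    (hX : ∀ i, (X i).PosSemidef) : (pullbackSum c B X).PosSemidef := by
  refine posSemidef_sum _ fun i _ => ?_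
  simpa using ((hX i).conjTranspose_mul_mul_same (B i)).smul (hc i)

lemma posDef_pullbackSum (hc : ∀ i, 0 < c i) (hker : ∀ x, (∀ i, B i *ᵥ x = 0) → x = 0)
    {X : ∀ i, Matrix (p i) (p i) ℝ} (hX : ∀ i, (X i).PosDef) : (pullbackSum c B X).PosDef := by
  refine PosDef.of_dotProduct_mulVec_pos (posSemidef_pullbackSum (fun i => (hc i).le)
    fun i => (hX i).posSemidef).1 fun x hx => ?_
  obtain ⟨j, hj⟩ : ∃ j, B j *ᵥ x ≠ 0 := by
    by_contra! h
    exact hx (hker x h)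
  have hquad : ∀ i, star x ⬝ᵥ (c i • ((B i)ᵀ * X i * B i)) *ᵥ x
      = c i * (star (B i *ᵥ x) ⬝ᵥ X i *ᵥ (B i *ᵥ x)) := fun i => by
    simp [smul_mulVec, ← mulVec_mulVec, dotProduct_mulVec, vecMul_transpose]
  simp only [pullbackSum, sum_mulVec, dotProduct_sum, hquad]
  exact Finset.sum_pos'
    (fun i _ => mul_nonneg (hc i).le ((hX i).posSemidef.dotProduct_mulVec_nonneg _))
    ⟨j, Finset.mem_univ j, mul_pos (hc j) ((hX j).dotProduct_mulVec_pos hj)⟩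

variable [DecidableEq N] [∀ i, DecidableEq (p i)]

lemma det_mul_det_pullbackSum_inv_le_one (hc : ∀ i, 0 ≤ c i)
    (hB : ∀ i, Function.Surjective (B i).mulVec)
    (hdim : ∑ i, c i * (Fintype.card (p i) : ℝ) = Fintype.card N)
    {A : Matrix N N ℝ} (hA : A.PosDef) :
    A.det * (pullbackSum c B fun i => (B i * A * (B i)ᵀ)⁻¹).det ≤ 1 := by
  have hK : ∀ i, (B i * A * (B i)ᵀ).PosDef := fun i => hA.mul_mul_transpose_of_surjective (hB i)
  set M := pullbackSum c B fun i => (B i * A * (B i)ᵀ)⁻¹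
  have htr : (A * M).trace = Fintype.card N := by
    simp only [M, trace_mul_comm A, trace_pullbackSum_mul,
      nonsing_inv_mul _ (hK _).det_pos.ne'.isUnit, trace_one]
    exact hdim
  calc A.det * M.det ≤ Real.exp ((A * M).trace - Fintype.card N) :=
        hA.posSemidef.det_mul_det_le_exp_trace_mul_sub_card
          (posSemidef_pullbackSum hc fun i => (hK i).inv.posSemidef)
    _ = 1 := by rw [htr, sub_self, Real.exp_zero]

lemma prod_det_rpow_mul_prod_det_rpow_le_one (hc : ∀ i, 0 ≤ c i)
    (hdim : ∑ i, c i * (Fintype.card (p i) : ℝ) = Fintype.card N)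
    {X : ∀ i, Matrix (p i) (p i) ℝ} (hX : ∀ i, (X i).PosSemidef)
    (hM : (pullbackSum c B X).PosDef) :
    (∏ i, (X i).det ^ c i) * ∏ i, (B i * (pullbackSum c B X)⁻¹ * (B i)ᵀ).det ^ c i ≤ 1 := by
  set M := pullbackSum c B X
  set K := fun i => B i * M⁻¹ * (B i)ᵀ
  have hK : ∀ i, (K i).PosSemidef := fun i => hM.inv.posSemidef.mul_mul_transpose_same (B i)
  have hdet : ∀ i, 0 ≤ (X i).det * (K i).det := fun i =>
    mul_nonneg (hX i).det_nonneg (hK i).det_nonneg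
  have htr : ∑ i, c i * (X i * K i).trace = Fintype.card N := by
    rw [← trace_pullbackSum_mul, mul_nonsing_inv _ hM.det_pos.ne'.isUnit, trace_one]
  calc _ = ∏ i, ((X i).det * (K i).det) ^ c i := by
        rw [← Finset.prod_mul_distrib]
        exact Finset.prod_congr rfl fun i _ =>
          (Real.mul_rpow (hX i).det_nonneg (hK i).det_nonneg).symm
    _ ≤ ∏ i, Real.exp ((X i * K i).trace - Fintype.card (p i)) ^ c i :=
        Finset.prod_le_prod (fun i _ => Real.rpow_nonneg (hdet i) _) fun i _ =>
          Real.rpow_le_rpow (hdet i) ((hX i).det_mul_det_le_exp_trace_mul_sub_card (hK i)) (hc i)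
    _ = Real.exp (∑ i, c i * (X i * K i).trace - ∑ i, c i * (Fintype.card (p i) : ℝ)) := by
        simp only [← Real.exp_mul, ← Real.exp_sum, ← Finset.sum_sub_distrib, mul_sub, mul_comm]
    _ = 1 := by rw [htr, hdim, sub_self, Real.exp_zero]

theorem det_le_mul_prod_det_rpow (hc : ∀ i, 0 ≤ c i)
    (hB : ∀ i, Function.Surjective (B i).mulVec)
    (hdim : ∑ i, c i * (Fintype.card (p i) : ℝ) = Fintype.card N) {K : ℝ}
    (h : ∀ X : ∀ i, Matrix (p i) (p i) ℝ, (∀ i, (X i).PosDef) →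
      ∏ i, (X i).det ^ c i ≤ K * (pullbackSum c B X).det)
    {A : Matrix N N ℝ} (hA : A.PosDef) : A.det ≤ K * ∏ i, (B i * A * (B i)ᵀ).det ^ c i := by
  have hK : ∀ i, (B i * A * (B i)ᵀ).PosDef := fun i => hA.mul_mul_transpose_of_surjective (hB i)
  refine le_mul_of_mul_le_one_of_inv_le_mul
    (posSemidef_pullbackSum hc fun i => (hK i).inv.posSemidef).det_nonneg
    (Finset.prod_pos fun i _ => Real.rpow_pos_of_pos (hK i).det_pos _)
    (det_mul_det_pullbackSum_inv_le_one hc hB hdim hA) ?_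
  simpa [det_nonsing_inv, Ring.inverse_eq_inv', Real.inv_rpow (hK _).det_pos.le]
    using h _ fun i => (hK i).inv

theorem prod_det_rpow_le_mul_det_pullbackSum (hc : ∀ i, 0 < c i)
    (hker : ∀ x, (∀ i, B i *ᵥ x = 0) → x = 0)
    (hdim : ∑ i, c i * (Fintype.card (p i) : ℝ) = Fintype.card N) {K : ℝ}
    (h : ∀ A : Matrix N N ℝ, A.PosDef → A.det ≤ K * ∏ i, (B i * A * (B i)ᵀ).det ^ c i)
    {X : ∀ i, Matrix (p i) (p i) ℝ} (hX : ∀ i, (X i).PosDef) :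
    ∏ i, (X i).det ^ c i ≤ K * (pullbackSum c B X).det := by
  have hM := posDef_pullbackSum hc hker hX
  refine le_mul_of_mul_le_one_of_inv_le_mul
    (Finset.prod_nonneg fun i _ =>
      Real.rpow_nonneg (hM.inv.posSemidef.mul_mul_transpose_same (B i)).det_nonneg _)
    hM.det_pos
    (prod_det_rpow_mul_prod_det_rpow_le_one (fun i => (hc i).le) hdim
      (fun i => (hX i).posSemidef) hM) ?_
  simpa [det_nonsing_inv, Ring.inverse_eq_inv'] using h _ hM.inv

end BrascampLieb

theorem gaussian_brascamp_lieb_duality_general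
    (m n : ℕ) (ni : Fin m → ℕ) (c : Fin m → ℝ) (hc : ∀ i, 0 < c i)
    (B : ∀ i, Matrix (Fin (ni i)) (Fin n) ℝ)
    (hB : ∀ i, Function.Surjective (B i).mulVec)
    (hdim : ∑ i, c i * (ni i : ℝ) = (n : ℝ))
    (hker : ∀ x : Fin n → ℝ, (∀ i, (B i).mulVec x = 0) → x = 0)
    (C : ℝ) :
    (∀ Ai : ∀ i, Matrix (Fin (ni i)) (Fin (ni i)) ℝ, (∀ i, (Ai i).PosDef) →
      ∏ i, (Ai i).det ^ (c i) ≤ C ^ 2 * (∑ i, c i • ((B i)ᵀ * Ai i * B i)).det) ↔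
    (∀ A : Matrix (Fin n) (Fin n) ℝ, A.PosDef →
      A.det ≤ C ^ 2 * ∏ i, ((B i * A * (B i)ᵀ).det) ^ (c i)) := by
  have hdim' : ∑ i, c i * (Fintype.card (Fin (ni i)) : ℝ) = Fintype.card (Fin n) := by
    simpa using hdim
  exact ⟨fun h _ hA => BrascampLieb.det_le_mul_prod_det_rpow (fun i => (hc i).le) hB hdim' h hA,
    fun h _ hAi => BrascampLieb.prod_det_rpow_le_mul_det_pullbackSum hc hker hdim' h hAi⟩

/-- **Duality between the Gaussian Brascamp–Lieb inequality and its determinantal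
dual formulation** (inequalities (9) and (11) of the paper). Under the homogeneity
condition `∑ cᵢ nᵢ = n` and nondegeneracy `⋂ ker Bᵢ = 0`, the inequality
`∏ det(Aᵢ)^{cᵢ} ≤ C² det(∑ cᵢ Bᵢ* Aᵢ Bᵢ)` for all positive definite `Aᵢ` is
equivalent to `det(A) ≤ C² ∏ det(Bᵢ A Bᵢ*)^{cᵢ}` for all positive definite `A`. -/
theorem gaussian_brascamp_lieb_duality
    (m n : ℕ) (ni : Fin m → ℕ) (c : Fin m → ℝ) (hc : ∀ i, 0 < c i)
    (B : ∀ i, Matrix (Fin (ni i)) (Fin n) ℝ)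
    (hB : ∀ i, Function.Surjective (B i).mulVec)
    (hdim : ∑ i, c i * (ni i : ℝ) = (n : ℝ))
    (hker : ∀ x : Fin n → ℝ, (∀ i, (B i).mulVec x = 0) → x = 0)
    (C : ℝ) (hC : 0 ≤ C) :
    (∀ Ai : ∀ i, Matrix (Fin (ni i)) (Fin (ni i)) ℝ, (∀ i, (Ai i).PosDef) →
      ∏ i, (Ai i).det ^ (c i) ≤ C ^ 2 * (∑ i, c i • ((B i)ᵀ * Ai i * B i)).det) ↔
    (∀ A : Matrix (Fin n) (Fin n) ℝ, A.PosDef →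
      A.det ≤ C ^ 2 * ∏ i, ((B i * A * (B i)ᵀ).det) ^ (c i)) :=
  gaussian_brascamp_lieb_duality_general m n ni c hc B hB hdim hker C
end

section
/- For every positive definite n×n real matrix A, log det(A) = inf { tr(AB) − n − log det(B) : B a positive definite n×n real matrix }, and the infimum is attained at B = A⁻¹. -/
/-!
For positive definite `A` and `B`, conjugating by `S = √A` turns `A * B` into the positive
definite matrix `S * B * S`, with the same trace and determinant `det A * det B`. Applying
`log λ ≤ λ - 1` to its eigenvalues gives `log det A + log det B ≤ tr (A * B) - n`, with equality
at `B = A⁻¹`.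
-/

open Matrix
open scoped MatrixOrder

namespace Matrix.PosDef

variable {ι : Type*} [Fintype ι] [DecidableEq ι]

theorem log_det_le_trace_sub_card {M : Matrix ι ι ℝ} (hM : M.PosDef) :
    Real.log M.det ≤ M.trace - Fintype.card ι := by
  set μ := hM.isHermitian.eigenvalues
  have hdet : M.det = ∏ i, μ i := by simpa using hM.isHermitian.det_eq_prod_eigenvalues
  have htr : M.trace = ∑ i, μ i := by simpa using hM.isHermitian.trace_eq_sum_eigenvalues
  rw [hdet, htr, Real.log_prod fun i _ => (hM.eigenvalues_pos i).ne']
  calc ∑ i, Real.log (μ i)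
      ≤ ∑ i, (μ i - 1) :=
        Finset.sum_le_sum fun i _ => Real.log_le_sub_one_of_pos (hM.eigenvalues_pos i)
    _ = ∑ i, μ i - Fintype.card ι := by simp [Finset.sum_sub_distrib]

theorem log_det_add_log_det_le_trace_mul {A B : Matrix ι ι ℝ} (hA : A.PosDef) (hB : B.PosDef) :
    Real.log A.det + Real.log B.det ≤ (A * B).trace - Fintype.card ι := by
  set S := CFC.sqrt A
  have hSS : S * S = A := CFC.sqrt_mul_sqrt_self A hA.posSemidef.nonneg
  have hS_herm : star S = S := (CFC.sqrt_nonneg A).posSemidef.isHermitian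
  have hS_unit : IsUnit S := by
    rw [isUnit_iff_isUnit_det, isUnit_iff_ne_zero]
    intro h
    simpa [← hSS, h] using hA.det_pos.ne'
  have hSBS : (S * B * S).PosDef := by
    simpa only [hS_herm] using hS_unit.posDef_star_left_conjugate_iff.mpr hB
  have htr : (S * B * S).trace = (A * B).trace := by rw [trace_mul_cycle, hSS]
  have hdet : (S * B * S).det = A.det * B.det := by
    rw [← hSS, det_mul, det_mul, det_mul]; ring
  have := hSBS.log_det_le_trace_sub_card
  rwa [htr, hdet, Real.log_mul hA.det_pos.ne' hB.det_pos.ne'] at this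

theorem log_det_eq_trace_mul_inv_sub_card_sub_log_det_inv {A : Matrix ι ι ℝ} (hA : A.PosDef) :
    Real.log A.det = (A * A⁻¹).trace - Fintype.card ι - Real.log A⁻¹.det := by
  have hA_unit : IsUnit A.det := hA.det_pos.ne'.isUnit
  rw [mul_nonsing_inv A hA_unit, trace_one, det_nonsing_inv, Ring.inverse_eq_inv', Real.log_inv]
  ring

end Matrix.PosDef

/-- **Variational formula for the log-determinant** (Section 4 of the paper).
For every positive definite `n × n` matrix `A`,
`log det(A) = inf { tr(AB) − n − log det(B) : B positive definite }`,
and the infimum is attained at `B = A⁻¹`. -/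
theorem log_det_variational
    (n : ℕ) (A : Matrix (Fin n) (Fin n) ℝ) (hA : A.PosDef) :
    IsLeast {r : ℝ | ∃ B : Matrix (Fin n) (Fin n) ℝ, B.PosDef ∧
        r = (A * B).trace - (n : ℝ) - Real.log B.det}
      (Real.log A.det) ∧
    Real.log A.det = (A * A⁻¹).trace - (n : ℝ) - Real.log (A⁻¹).det := by
  have hattained := hA.log_det_eq_trace_mul_inv_sub_card_sub_log_det_inv
  rw [Fintype.card_fin] at hattained
  refine ⟨⟨⟨A⁻¹, hA.inv, hattained⟩, ?_⟩, hattained⟩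
  rintro r ⟨B, hB, rfl⟩
  have := hA.log_det_add_log_det_le_trace_mul hB
  rw [Fintype.card_fin] at this
  linarith
end

section
/- Let (c₁,B₁),…,(cₘ,Bₘ) be a Brascamp–Lieb datum on ℝⁿ. Suppose the positive definite n×n matrix A is a maximizer of the function F(M) = log det(M) − Σᵢ cᵢ log det(Bᵢ M Bᵢ*) over all positive definite n×n matrices M (equivalently, A is extremal in the inequality det(M) ≤ C_g² ∏ᵢ det(Bᵢ M Bᵢ*)^{cᵢ}). Then A satisfies A⁻¹ = Σᵢ cᵢ Bᵢ* (Bᵢ A Bᵢ*)⁻¹ Bᵢ. -/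
/-!
Perturb the maximizer along the line `t ↦ A + t • D`. Positive definiteness is an open condition
on symmetric matrices, so `t = 0` is a local maximum of `F (A + t • D)`, whose derivative there is
`tr ((A⁻¹ - G) D)` by Jacobi's formula `d/dt log det (S + t K) = tr (S⁻¹ K)`, where
`G = ∑ cᵢ Bᵢᵀ (Bᵢ A Bᵢᵀ)⁻¹ Bᵢ`. Choosing the symmetric direction `D = A⁻¹ - G` gives
`tr (Dᵀ D) = 0`, hence `D = 0`.
-/

open Matrix Filter Topology

namespace Matrix

variable {ι : Type*} [Fintype ι]

lemma vecMul_injective_of_mulVec_surjective_s14 {κ R : Type*} [Fintype κ] [DecidableEq κ]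
    [CommRing R] {B : Matrix κ ι R} (hB : Function.Surjective B.mulVec) :
    Function.Injective B.vecMul := by
  obtain ⟨N, hN⟩ := mulVec_surjective_iff_exists_right_inverse.mp hB
  refine Function.LeftInverse.injective (g := fun y => y ᵥ* N) fun x => ?_
  simp only [vecMul_vecMul, hN, vecMul_one]

lemma PosDef.eventually_posDef_of_isHermitian {A : Matrix ι ι ℝ} (hA : A.PosDef) :
    ∀ᶠ M in 𝓝 A, M.IsHermitian → M.PosDef := by
  have hsphere : ∀ᶠ M in 𝓝 A, ∀ x ∈ Metric.sphere (0 : ι → ℝ) 1, 0 < x ⬝ᵥ M *ᵥ x := by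
    refine (isCompact_sphere 0 1).eventually_forall_of_forall_eventually fun x hx => ?_
    have hcont : Continuous fun p : Matrix ι ι ℝ × (ι → ℝ) => p.2 ⬝ᵥ p.1 *ᵥ p.2 := by
      fun_prop
    exact continuousAt_const.eventually_lt hcont.continuousAt
      (by simpa using hA.dotProduct_mulVec_pos (Metric.ne_of_mem_sphere hx one_ne_zero))
  -- a quadratic form positive on the unit sphere is positive everywhere by homogeneity
  filter_upwards [hsphere] with M hM hMh
  refine PosDef.of_dotProduct_mulVec_pos hMh fun x hx => ?_
  have hx' : 0 < ‖x‖ := norm_pos_iff.mpr hx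
  have hu : ‖x‖⁻¹ • x ∈ Metric.sphere (0 : ι → ℝ) 1 := by
    simp [norm_smul, hx'.ne']
  have := hM _ hu
  simp only [mulVec_smul, dotProduct_smul, smul_dotProduct, smul_eq_mul, star_trivial] at this ⊢
  have hr := (inv_pos.mpr hx').le
  exact pos_of_mul_pos_right (pos_of_mul_pos_right this hr) hr

variable {𝕜 : Type*} [DecidableEq ι] [NontriviallyNormedField 𝕜]

lemma hasDerivAt_det_one_add_smul (M : Matrix ι ι 𝕜) :
    HasDerivAt (fun t : 𝕜 => (1 + t • M).det) M.trace 0 := by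
  set P := (det (1 + (Polynomial.X : Polynomial 𝕜) • M.map Polynomial.C)).divX.divX
  have hlin : HasDerivAt (fun t : 𝕜 => 1 + M.trace * t) M.trace 0 := by
    simpa using ((hasDerivAt_id (0 : 𝕜)).const_mul M.trace).const_add 1
  have hquad : HasDerivAt (fun t : 𝕜 => P.eval t * t ^ 2) 0 0 :=
    ((P.hasDerivAt 0).mul (hasDerivAt_pow 2 0)).congr_deriv (by simp)
  exact ((hlin.add hquad).congr_deriv (add_zero _)).congr_of_eventuallyEq
    (Eventually.of_forall fun t => det_one_add_smul t M)

lemma hasDerivAt_det_add_smul {S : Matrix ι ι 𝕜} (hS : IsUnit S.det) (K : Matrix ι ι 𝕜) :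
    HasDerivAt (fun t : 𝕜 => (S + t • K).det) (S.det * (S⁻¹ * K).trace) 0 := by
  have hfactor : ∀ t : 𝕜, S + t • K = S * (1 + t • (S⁻¹ * K)) := fun t => by
    rw [mul_add, mul_one, Matrix.mul_smul, ← Matrix.mul_assoc, mul_nonsing_inv _ hS,
      Matrix.one_mul]
  simpa only [hfactor, det_mul] using (hasDerivAt_det_one_add_smul (S⁻¹ * K)).const_mul S.det

lemma hasDerivAt_log_det_add_smul {S : Matrix ι ι ℝ} (hS : IsUnit S.det) (K : Matrix ι ι ℝ) :
    HasDerivAt (fun t : ℝ => Real.log (S + t • K).det) (S⁻¹ * K).trace 0 := by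
  have hS0 : S.det ≠ 0 := hS.ne_zero
  simpa [hS0] using (hasDerivAt_det_add_smul hS K).log (by simpa using hS0)

end Matrix

section BrascampLieb

variable {ι n : Type*} [Fintype ι] [Fintype n] [DecidableEq n] {κ : ι → Type*}
  [∀ i, Fintype (κ i)] [∀ i, DecidableEq (κ i)]

noncomputable def brascampLiebFunctional (c : ι → ℝ) (B : ∀ i, Matrix (κ i) n ℝ)
    (M : Matrix n n ℝ) : ℝ :=
  Real.log M.det - ∑ i, c i * Real.log (B i * M * (B i)ᵀ).det

lemma hasDerivAt_brascampLiebFunctional_add_smul (c : ι → ℝ) (B : ∀ i, Matrix (κ i) n ℝ)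
    {A : Matrix n n ℝ} (hA : IsUnit A.det) (hBA : ∀ i, IsUnit (B i * A * (B i)ᵀ).det)
    (D : Matrix n n ℝ) :
    HasDerivAt (fun t : ℝ => brascampLiebFunctional c B (A + t • D))
      ((A⁻¹ - ∑ i, c i • ((B i)ᵀ * (B i * A * (B i)ᵀ)⁻¹ * B i)) * D).trace 0 := by
  have hexpand : ∀ i (t : ℝ),
      B i * (A + t • D) * (B i)ᵀ = B i * A * (B i)ᵀ + t • (B i * D * (B i)ᵀ) := fun i t => by
    rw [Matrix.mul_add, Matrix.add_mul, Matrix.mul_smul, Matrix.smul_mul]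
  have hderiv := (hasDerivAt_log_det_add_smul hA D).fun_sub
    (HasDerivAt.fun_sum (u := Finset.univ) fun i _ =>
      (hasDerivAt_log_det_add_smul (hBA i) (B i * D * (B i)ᵀ)).const_mul (c i))
  simp only [brascampLiebFunctional, hexpand]
  refine hderiv.congr_deriv ?_
  rw [Matrix.sub_mul, trace_sub, Finset.sum_mul, trace_sum]
  congr 1
  refine Finset.sum_congr rfl fun i _ => ?_
  rw [Matrix.smul_mul, trace_smul, smul_eq_mul]
  simp only [Matrix.mul_assoc]
  rw [trace_mul_comm (B i)ᵀ]
  simp only [Matrix.mul_assoc]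

end BrascampLieb

theorem extremizer_satisfies_john_equation_general
    (m n : ℕ) (ni : Fin m → ℕ) (c : Fin m → ℝ)
    (B : ∀ i, Matrix (Fin (ni i)) (Fin n) ℝ)
    (hB : ∀ i, Function.Surjective (B i).mulVec)
    (A : Matrix (Fin n) (Fin n) ℝ) (hA : A.PosDef)
    (hmax : ∀ M : Matrix (Fin n) (Fin n) ℝ, M.PosDef →
      Real.log M.det - ∑ i, c i * Real.log ((B i * M * (B i)ᵀ).det) ≤
        Real.log A.det - ∑ i, c i * Real.log ((B i * A * (B i)ᵀ).det)) :
    A⁻¹ = ∑ i, c i • ((B i)ᵀ * (B i * A * (B i)ᵀ)⁻¹ * B i) := by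
  have hBA : ∀ i, (B i * A * (B i)ᵀ).PosDef := fun i => by
    simpa using hA.mul_mul_conjTranspose_same (vecMul_injective_of_mulVec_surjective_s14 (hB i))
  set D := A⁻¹ - ∑ i, c i • ((B i)ᵀ * (B i * A * (B i)ᵀ)⁻¹ * B i)
  have hD : D.IsHermitian := by
    refine hA.isHermitian.inv.sub (IsSelfAdjoint.isHermitian (isSelfAdjoint_sum _ fun i _ => ?_))
    simpa only [conjTranspose_eq_transpose_of_trivial] using
      ((isHermitian_conjTranspose_mul_mul (B i) (hBA i).isHermitian.inv).smul
        (IsSelfAdjoint.all (c i))).isSelfAdjoint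
  have hline : Tendsto (fun t : ℝ => A + t • D) (𝓝 0) (𝓝 A) :=
    Continuous.tendsto' (by fun_prop) 0 A (by simp)
  have hloc : IsLocalMax (fun t : ℝ => brascampLiebFunctional c B (A + t • D)) 0 := by
    filter_upwards [hline.eventually hA.eventually_posDef_of_isHermitian] with t ht
    rw [zero_smul, add_zero]
    exact hmax _ (ht (hA.isHermitian.add (hD.smul (IsSelfAdjoint.all t))))
  have hDD : (Dᴴ * D).trace = 0 := by
    rw [hD.eq]
    exact hloc.hasDerivAt_eq_zero (hasDerivAt_brascampLiebFunctional_add_smul c B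
      ((isUnit_iff_isUnit_det A).mp hA.isUnit)
      (fun i => (isUnit_iff_isUnit_det _).mp (hBA i).isUnit) D)
  exact sub_eq_zero.mp (trace_conjTranspose_mul_self_eq_zero_iff.mp hDD)

/-- **Extremizers satisfy the structural equation** (Lemma 7 of the paper).
If the positive definite matrix `A` maximizes
`M ↦ log det(M) − ∑ cᵢ log det(Bᵢ M Bᵢ*)` over positive definite matrices `M`,
then `A⁻¹ = ∑ cᵢ Bᵢ* (Bᵢ A Bᵢ*)⁻¹ Bᵢ`. -/
theorem extremizer_satisfies_john_equation
    (m n : ℕ) (ni : Fin m → ℕ) (c : Fin m → ℝ) (hc : ∀ i, 0 < c i)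
    (B : ∀ i, Matrix (Fin (ni i)) (Fin n) ℝ)
    (hB : ∀ i, Function.Surjective (B i).mulVec)
    (A : Matrix (Fin n) (Fin n) ℝ) (hA : A.PosDef)
    (hmax : ∀ M : Matrix (Fin n) (Fin n) ℝ, M.PosDef →
      Real.log M.det - ∑ i, c i * Real.log ((B i * M * (B i)ᵀ).det) ≤
        Real.log A.det - ∑ i, c i * Real.log ((B i * A * (B i)ᵀ).det)) :
    A⁻¹ = ∑ i, c i • ((B i)ᵀ * (B i * A * (B i)ᵀ)⁻¹ * B i) :=
  extremizer_satisfies_john_equation_general m n ni c B hB A hA hmax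
end

section
/- Let (c₁,B₁),…,(cₘ,Bₘ) be a Brascamp–Lieb datum on ℝⁿ, and let f₁,…,fₘ be nonnegative, upper semi-continuous, compactly supported functions on ℝ^{n₁},…,ℝ^{nₘ} respectively. Define f : ℝⁿ → [0,∞) by f(x) = sup { ∏ᵢ fᵢ(xᵢ)^{cᵢ} : (x₁,…,xₘ) ∈ ℝ^{n₁}×⋯×ℝ^{nₘ}, Σᵢ cᵢ Bᵢ* xᵢ = x }, with the convention sup(∅) = 0. Then f is upper semi-continuous. -/
/-!
Put `G y = ∏ᵢ fᵢ(yᵢ)^{cᵢ}` and `L y = ∑ᵢ cᵢ Bᵢᵀ yᵢ`, so that `f(x) = sup G(L⁻¹{x})`. The function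
`G` is nonnegative, upper semicontinuous and compactly supported. If `f(x₀) < l`, pick
`0 < l' ∈ (f(x₀), l)`: the superlevel set `{G ≥ l'}` is compact and avoids `L⁻¹{x₀}`, so its
image under `L` is a compact set missing `x₀`, and off that image `f ≤ l' < l`.
-/

open Matrix Set

theorem UpperSemicontinuous.mul_of_nonneg {X : Type*} [TopologicalSpace X] {g h : X → ℝ}
    (hg : UpperSemicontinuous g) (hh : UpperSemicontinuous h) (hg0 : ∀ x, 0 ≤ g x)
    (hh0 : ∀ x, 0 ≤ h x) :
    UpperSemicontinuous fun x => g x * h x := by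
  intro x l hl
  have hcont : ContinuousAt (fun d : ℝ => (g x + d) * (h x + d)) 0 := by fun_prop
  have hsmall : ∀ᶠ d in nhdsWithin (0 : ℝ) (Ioi 0), (g x + d) * (h x + d) < l :=
    nhdsWithin_le_nhds (hcont (Iio_mem_nhds (by simpa using hl)))
  obtain ⟨δ, hδl, hδ⟩ := (hsmall.and self_mem_nhdsWithin).exists
  filter_upwards [hg x (g x + δ) (lt_add_of_pos_right _ hδ),
    hh x (h x + δ) (lt_add_of_pos_right _ hδ)] with y hgy hhy
  exact (mul_lt_mul'' hgy hhy (hg0 y) (hh0 y)).trans hδl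

theorem upperSemicontinuous_finset_prod_of_nonneg {X ι : Type*} [TopologicalSpace X]
    (s : Finset ι) {g : ι → X → ℝ} (hg : ∀ i ∈ s, UpperSemicontinuous (g i))
    (hg0 : ∀ i ∈ s, ∀ x, 0 ≤ g i x) :
    UpperSemicontinuous fun x => ∏ i ∈ s, g i x := by
  classical
  induction s using Finset.induction_on with
  | empty => simpa using upperSemicontinuous_const
  | insert a s ha ih =>
    rw [Finset.forall_mem_insert] at hg hg0
    simp only [Finset.prod_insert ha]
    exact hg.1.mul_of_nonneg (ih hg.2 hg0.2) hg0.1 fun x =>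
      Finset.prod_nonneg fun i hi => hg0.2 i hi x

theorem UpperSemicontinuous.rpow_const {X : Type*} [TopologicalSpace X] {g : X → ℝ}
    (hg : UpperSemicontinuous g) (hg0 : ∀ x, 0 ≤ g x) {c : ℝ} (hc : 0 ≤ c) :
    UpperSemicontinuous fun x => g x ^ c := by
  have hmono : Monotone fun t : ℝ => max t 0 ^ c := fun s t hst =>
    Real.rpow_le_rpow (le_max_right _ _) (max_le_max_right 0 hst) hc
  have hcont : Continuous fun t : ℝ => max t 0 ^ c :=
    (Real.continuous_rpow_const hc).comp (continuous_id.max continuous_const)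
  have hg_eq : (fun x => g x ^ c) = (fun t : ℝ => max t 0 ^ c) ∘ g :=
    funext fun x => by rw [Function.comp_apply, max_eq_left (hg0 x)]
  rw [hg_eq]
  exact hcont.comp_upperSemicontinuous hg hmono

theorem UpperSemicontinuous.bddAbove_range_of_hasCompactSupport {X : Type*} [TopologicalSpace X]
    {g : X → ℝ} (hg : UpperSemicontinuous g) (hgc : HasCompactSupport g) : BddAbove (range g) := by
  refine (((hg.upperSemicontinuousOn _).bddAbove_of_isCompact hgc).union
    (bddAbove_singleton (a := 0))).mono ?_
  rintro _ ⟨x, rfl⟩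
  by_cases hx : x ∈ tsupport g
  · exact Or.inl (mem_image_of_mem g hx)
  · exact Or.inr (image_eq_zero_of_notMem_tsupport hx)

theorem hasCompactSupport_prod_apply {ι : Type*} [Fintype ι] {X : ι → Type*}
    [∀ i, TopologicalSpace (X i)] {M₀ : Type*} [CommMonoidWithZero M₀] {g : ∀ i, X i → M₀}
    (hg : ∀ i, HasCompactSupport (g i)) : HasCompactSupport fun y : ∀ i, X i => ∏ i, g i (y i) := by
  refine .intro' (isCompact_univ_pi hg) (isClosed_set_pi fun i _ => isClosed_tsupport (g i)) ?_
  intro y hy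
  obtain ⟨i, -, hi⟩ := not_forall₂.1 hy
  exact Finset.prod_eq_zero (Finset.mem_univ i) (image_eq_zero_of_notMem_tsupport hi)

theorem UpperSemicontinuous.sSup_image_preimage_singleton {X Y : Type*} [TopologicalSpace X]
    [TopologicalSpace Y] [T2Space Y] {G : X → ℝ} (hG : UpperSemicontinuous G) (hG0 : ∀ x, 0 ≤ G x)
    (hGc : HasCompactSupport G) {L : X → Y} (hL : Continuous L) :
    UpperSemicontinuous fun y => sSup (G '' (L ⁻¹' {y})) := by
  intro y₀ l hl
  obtain ⟨l', hl₀l', hl'l⟩ := exists_between hl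
  have hl'0 : 0 < l' :=
    (Real.sSup_nonneg (by rintro _ ⟨x, -, rfl⟩; exact hG0 x)).trans_lt hl₀l'
  have hsuper : IsCompact {x | l' ≤ G x} := by
    refine hGc.of_isClosed_subset (hG.isClosed_preimage l') fun x hx => ?_
    exact subset_tsupport G (ne_of_gt (hl'0.trans_le hx))
  have hy₀ : y₀ ∉ L '' {x | l' ≤ G x} := by
    rintro ⟨x, hx, rfl⟩
    have hbdd := (hG.bddAbove_range_of_hasCompactSupport hGc).mono
      (image_subset_range G (L ⁻¹' {L x}))
    exact (hx.trans (le_csSup hbdd ⟨x, rfl, rfl⟩)).not_gt hl₀l'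
  filter_upwards [((hsuper.image hL).isClosed.isOpen_compl).mem_nhds hy₀] with y hy
  refine (Real.sSup_le ?_ hl'0.le).trans_lt hl'l
  rintro _ ⟨x, hxy, rfl⟩
  exact le_of_not_ge fun hx => hy ⟨x, hx, hxy⟩

theorem sup_convolution_upperSemicontinuous_general
    (m n : ℕ) (ni : Fin m → ℕ) (c : Fin m → ℝ) (hc : ∀ i, 0 < c i)
    (B : ∀ i, Matrix (Fin (ni i)) (Fin n) ℝ)
    (f : ∀ i, (Fin (ni i) → ℝ) → ℝ)
    (hf0 : ∀ i x, 0 ≤ f i x)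
    (hfusc : ∀ i, UpperSemicontinuous (f i))
    (hfcpt : ∀ i, HasCompactSupport (f i)) :
    UpperSemicontinuous (fun x : Fin n → ℝ =>
      sSup {r : ℝ | ∃ y : ∀ i, Fin (ni i) → ℝ,
        (∑ i, c i • (B i)ᵀ.mulVec (y i)) = x ∧ r = ∏ i, (f i (y i)) ^ (c i)}) := by
  have hpow0 : ∀ i x, 0 ≤ f i x ^ c i := fun i x => Real.rpow_nonneg (hf0 i x) _
  have hG0 : ∀ y : ∀ i, Fin (ni i) → ℝ, 0 ≤ ∏ i, f i (y i) ^ c i :=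
    fun y => Finset.prod_nonneg fun i _ => hpow0 i (y i)
  have hG : UpperSemicontinuous fun y : ∀ i, Fin (ni i) → ℝ => ∏ i, f i (y i) ^ c i :=
    upperSemicontinuous_finset_prod_of_nonneg _
      (fun i _ => ((hfusc i).rpow_const (hf0 i) (hc i).le).comp (continuous_apply i))
      (fun i _ y => hpow0 i (y i))
  have hGc : HasCompactSupport fun y : ∀ i, Fin (ni i) → ℝ => ∏ i, f i (y i) ^ c i :=
    hasCompactSupport_prod_apply (g := fun i t => f i t ^ c i) fun i =>
      (hfcpt i).rpow_const (hc i).ne'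
  have hL : Continuous fun y : ∀ i, Fin (ni i) → ℝ => ∑ i, c i • (B i)ᵀ.mulVec (y i) := by
    fun_prop
  convert hG.sSup_image_preimage_singleton hG0 hGc hL using 1
  ext x
  congr 1
  ext r
  simp only [mem_ofPred_eq, mem_image, mem_preimage, mem_singleton_iff, eq_comm (a := r)]

/-- **Upper semi-continuity of the sup-convolution** (Lemma 9 of the paper).
If `f₁, …, fₘ` are nonnegative, upper semi-continuous, compactly supported functions,
then the function `f(x) = sup { ∏ fᵢ(xᵢ)^{cᵢ} : ∑ cᵢ Bᵢ* xᵢ = x }` (with the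
convention `sup ∅ = 0`, which is Mathlib's convention for `sSup` on `ℝ`) is upper
semi-continuous. -/
theorem sup_convolution_upperSemicontinuous
    (m n : ℕ) (ni : Fin m → ℕ) (c : Fin m → ℝ) (hc : ∀ i, 0 < c i)
    (B : ∀ i, Matrix (Fin (ni i)) (Fin n) ℝ)
    (hB : ∀ i, Function.Surjective (B i).mulVec)
    (f : ∀ i, (Fin (ni i) → ℝ) → ℝ)
    (hf0 : ∀ i x, 0 ≤ f i x)
    (hfusc : ∀ i, UpperSemicontinuous (f i))
    (hfcpt : ∀ i, HasCompactSupport (f i)) :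
    UpperSemicontinuous (fun x : Fin n → ℝ =>
      sSup {r : ℝ | ∃ y : ∀ i, Fin (ni i) → ℝ,
        (∑ i, c i • (B i)ᵀ.mulVec (y i)) = x ∧ r = ∏ i, (f i (y i)) ^ (c i)}) :=
  sup_convolution_upperSemicontinuous_general m n ni c hc B f hf0 hfusc hfcpt
end
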